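/- There exists a constant c > 0 depending only on k such that for all sufficiently large n and all τ with |τ| ≤ 2πσ_n, |F_k(σ_n + iτ)| ≤ |F_k(σ_n)| · exp(−c τ² σ_n^{−(2+1/k)}). -/

import Mathlib

/-!
Each factor satisfies `‖1 - e^{-b(σ+iτ)}‖ ≥ 1 - e^{-bσ}`, so `‖F_k(σ+iτ)‖ / F_k(σ)` is a product
of factors at most `1`. For the `≍ σ^{-1/k}` indices `m` with `m^k σ ≤ 1/2` the bound
`1 - cos θ ≥ 2θ²/π²` improves the factor to `exp (-τ²/(90σ²))`, which gives the Gaussian decay.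
Finally `σ_n ≤ 1/2` for large `n`, because `w_k(r) ≤ r²` bounds `∑ w_k(r) e^{-rσ}` uniformly
for `σ ≥ 1/2`.
-/

open Complex Real

/-- `wk k r = ∑_{m^k ∣ r} m^k`, sum over positive integers `m` with `m^k ∣ r`. -/
def wk (k r : ℕ) : ℕ := ∑ m ∈ Finset.Icc 1 r, if m ^ k ∣ r then m ^ k else 0

/-- `F_k(s) = ∏_{m ≥ 1} (1 - e^{-m^k s})⁻¹`. -/
noncomputable def Fk (k : ℕ) (s : ℂ) : ℂ :=
  ∏' m : ℕ, (1 - Complex.exp (-((m + 1 : ℕ) : ℂ) ^ k * s))⁻¹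

lemma wk_le_sq (k r : ℕ) : wk k r ≤ r ^ 2 := by
  calc wk k r ≤ ∑ _m ∈ Finset.Icc 1 r, r := Finset.sum_le_sum fun m hm => by
          split_ifs with h
          · exact Nat.le_of_dvd (by simp at hm; omega) h
          · exact Nat.zero_le r
    _ = r ^ 2 := by simp [sq]

lemma norm_one_sub_exp_sq (z : ℂ) :
    ‖1 - cexp z‖ ^ 2 = (1 - rexp z.re) ^ 2 + 2 * rexp z.re * (1 - Real.cos z.im) := by
  rw [Complex.sq_norm, Complex.normSq_apply]
  simp only [sub_re, one_re, exp_re, sub_im, one_im, exp_im]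
  linear_combination rexp z.re ^ 2 * Real.sin_sq_add_cos_sq z.im

lemma one_sub_exp_re_le_norm_one_sub_exp (z : ℂ) : 1 - rexp z.re ≤ ‖1 - cexp z‖ := by
  simpa [Complex.norm_exp] using norm_sub_norm_le (1 : ℂ) (cexp z)

lemma sq_div_le_log_norm_one_sub_exp_sub_log {u θ : ℝ} (hu : 0 < u) (hu' : u ≤ 1 / 2)
    (hθ : |θ| ≤ 2 * π * u) :
    θ ^ 2 / (90 * u ^ 2) ≤ Real.log ‖1 - cexp (-(u + θ * I))‖ - Real.log (1 - rexp (-u)) := by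
  have hnorm_sq := norm_one_sub_exp_sq (-(u + θ * I))
  simp only [neg_re, add_re, ofReal_re, mul_re, ofReal_im, I_re, I_im, neg_im, add_im, mul_im,
    Real.cos_neg, mul_zero, sub_zero, mul_one, add_zero, zero_add] at hnorm_sq
  set x := rexp (-u)
  -- `‖1 - e^{-u-iθ}‖² ≥ (1 + w)(1 - e^{-u})²` by `1 - cos θ ≥ 2θ²/π²` and `1 - e^{-u} ≤ u`;
  -- then `log (1 + w) ≥ w / 9` since `w ≤ 8`.
  set w := 2 * θ ^ 2 / (π ^ 2 * u ^ 2)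
  have hx : 1 - x ≤ u := by linarith [add_one_le_exp (-u)]
  have hx_half : 1 / 2 ≤ x := by linarith [add_one_le_exp (-u)]
  have hx_pos : 0 < 1 - x := by simp [x, hu]
  have hθ_sq : θ ^ 2 ≤ 4 * π ^ 2 * u ^ 2 := by
    nlinarith [sq_abs θ, abs_nonneg θ, pi_pos]
  have hw : w ≤ 8 := by
    rw [div_le_iff₀ (by positivity)]; linarith
  have hπ : π ^ 2 ≤ 10 := by nlinarith [pi_lt_d2, pi_pos]
  have hcos : 2 / π ^ 2 * θ ^ 2 ≤ 1 - Real.cos θ := by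
    linarith [cos_le_one_sub_mul_cos_sq (hθ.trans (by nlinarith [pi_pos]))]
  have hwx : w * (1 - x) ^ 2 ≤ 2 / π ^ 2 * θ ^ 2 := by
    calc w * (1 - x) ^ 2 ≤ w * u ^ 2 := by gcongr
      _ = 2 / π ^ 2 * θ ^ 2 := by simp only [w]; field_simp
  have hnorm : (1 + w) * (1 - x) ^ 2 ≤ ‖1 - cexp (-(u + θ * I))‖ ^ 2 := by
    rw [hnorm_sq]
    nlinarith [mul_nonneg (sub_nonneg.2 hx_half) (sub_nonneg.2 (Real.cos_le_one θ))]
  have hlog : Real.log (1 + w) ≤ 2 * (Real.log ‖1 - cexp (-(u + θ * I))‖ - Real.log (1 - x)) := by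
    have h := log_le_log (by positivity) hnorm
    rw [log_mul (by positivity) (by positivity), log_pow, log_pow] at h
    push_cast at h
    linarith
  have hw_log : w / 9 ≤ Real.log (1 + w) := by
    refine le_trans ?_ (one_sub_inv_le_log_of_pos (by positivity))
    rw [le_sub_iff_add_le, ← le_sub_iff_add_le', inv_le_iff_one_le_mul₀ (by positivity)]
    nlinarith [mul_nonneg (by positivity : 0 ≤ w) (sub_nonneg.2 hw)]
  have hθw : θ ^ 2 / (90 * u ^ 2) ≤ w / 18 := by
    simp only [w]
    rw [div_div, div_le_div_iff₀ (by positivity) (by positivity)]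
    nlinarith [sq_nonneg θ, sq_nonneg u, mul_nonneg (sq_nonneg θ) (sq_nonneg u)]
  linarith

lemma norm_tprod_inv_one_add {ι K : Type*} [NormedField K] [CompleteSpace K] {f : ι → K}
    (hf : ∀ i, 1 + f i ≠ 0) (hu : Summable (‖f ·‖)) :
    ‖∏' i, (1 + f i)⁻¹‖ = rexp (-∑' i, Real.log ‖1 + f i‖) := by
  have hmul := multipliable_one_add_of_summable hu
  rw [hmul.tprod_inv₀ (tprod_one_add_ne_zero_of_summable hf hu), norm_inv, hmul.norm_tprod,
    ← Real.rexp_tsum_eq_tprod (fun i => norm_pos_iff.2 (hf i)) hu.summable_log_norm_one_add,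
    Real.exp_neg]

lemma norm_exp_neg_ofReal_mul (b : ℝ) (s : ℂ) : ‖cexp (-(b : ℂ) * s)‖ = rexp (-(b * s.re)) := by
  simp [Complex.norm_exp]

section ExpProduct

variable {b : ℕ → ℝ} {s : ℂ}

lemma summable_norm_exp_neg_mul (hb : ∀ m : ℕ, (m : ℝ) + 1 ≤ b m) (hs : 0 < s.re) :
    Summable fun m => ‖cexp (-(b m : ℂ) * s)‖ := by
  simp_rw [norm_exp_neg_ofReal_mul, ← mul_neg, mul_comm (b _)]
  exact summable_exp_nat_mul_of_ge (neg_neg_of_pos hs) fun m => by linarith [hb m]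

lemma summable_log_norm_one_sub_exp (hb : ∀ m : ℕ, (m : ℝ) + 1 ≤ b m) (hs : 0 < s.re) :
    Summable fun m => Real.log ‖1 - cexp (-(b m : ℂ) * s)‖ := by
  simpa [sub_eq_add_neg] using
    Summable.summable_log_norm_one_add (f := fun m => -cexp (-(b m : ℂ) * s))
      (by simpa using summable_norm_exp_neg_mul hb hs)

lemma norm_tprod_inv_one_sub_exp (hb : ∀ m : ℕ, (m : ℝ) + 1 ≤ b m) (hs : 0 < s.re) :
    ‖∏' m, (1 - cexp (-(b m : ℂ) * s))⁻¹‖ =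
      rexp (-∑' m, Real.log ‖1 - cexp (-(b m : ℂ) * s)‖) := by
  have hne : ∀ m, 1 + -cexp (-(b m : ℂ) * s) ≠ 0 := fun m h => by
    have hq : ‖cexp (-(b m : ℂ) * s)‖ = 1 := by
      rw [show cexp (-(b m : ℂ) * s) = 1 by linear_combination -h, norm_one]
    rw [norm_exp_neg_ofReal_mul, Real.exp_eq_one_iff, neg_eq_zero] at hq
    have hbm : 0 < b m := by linarith [hb m, m.cast_nonneg (α := ℝ)]
    exact (mul_pos hbm hs).ne' hq
  simpa [sub_eq_add_neg] using
    norm_tprod_inv_one_add hne (by simpa using summable_norm_exp_neg_mul hb hs)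

end ExpProduct

lemma Fk_eq_tprod (k : ℕ) (s : ℂ) :
    Fk k s = ∏' m : ℕ, (1 - cexp (-((((m + 1 : ℕ) : ℝ) ^ k : ℝ) : ℂ) * s))⁻¹ := by
  simp [Fk]

lemma natCast_add_one_le_pow {k : ℕ} (hk : 1 ≤ k) (m : ℕ) :
    (m : ℝ) + 1 ≤ ((m + 1 : ℕ) : ℝ) ^ k := by
  exact_mod_cast Nat.le_self_pow (by omega) (m + 1)

lemma norm_Fk {k : ℕ} (hk : 1 ≤ k) {s : ℂ} (hs : 0 < s.re) :
    ‖Fk k s‖ = rexp (-∑' m : ℕ, Real.log ‖1 - cexp (-((((m + 1 : ℕ) : ℝ) ^ k : ℝ) : ℂ) * s)‖) := by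
  rw [Fk_eq_tprod]
  exact norm_tprod_inv_one_sub_exp (natCast_add_one_le_pow hk) hs

section Factor

variable {b σ : ℝ} (τ : ℝ)

lemma norm_one_sub_exp_neg_ofReal_mul (hb : 0 < b) (hσ : 0 < σ) :
    ‖1 - cexp (-(b : ℂ) * σ)‖ = 1 - rexp (-(b * σ)) := by
  rw [show -(b : ℂ) * σ = ((-(b * σ) : ℝ) : ℂ) by push_cast; ring, ← ofReal_exp, ← ofReal_one,
    ← ofReal_sub, norm_real, Real.norm_of_nonneg (by simp; positivity)]

lemma log_norm_one_sub_exp_le (hb : 0 < b) (hσ : 0 < σ) :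
    Real.log ‖1 - cexp (-(b : ℂ) * σ)‖ ≤ Real.log ‖1 - cexp (-(b : ℂ) * (σ + τ * I))‖ := by
  rw [norm_one_sub_exp_neg_ofReal_mul hb hσ]
  refine log_le_log (by simp; positivity) ?_
  simpa using one_sub_exp_re_le_norm_one_sub_exp (-(b : ℂ) * (σ + τ * I))

lemma sq_div_le_log_norm_one_sub_exp_sub (hb : 0 < b) (hσ : 0 < σ) (hbσ : b * σ ≤ 1 / 2)
    (hτ : |τ| ≤ 2 * π * σ) :
    τ ^ 2 / (90 * σ ^ 2) ≤
      Real.log ‖1 - cexp (-(b : ℂ) * (σ + τ * I))‖ - Real.log ‖1 - cexp (-(b : ℂ) * σ)‖ := by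
  have hθ : |b * τ| ≤ 2 * π * (b * σ) := by
    rw [abs_mul, abs_of_pos hb]; nlinarith
  have h := sq_div_le_log_norm_one_sub_exp_sub_log (mul_pos hb hσ) hbσ hθ
  rw [norm_one_sub_exp_neg_ofReal_mul hb hσ,
    show -(b : ℂ) * (σ + τ * I) = -(((b * σ : ℝ) : ℂ) + ((b * τ : ℝ) : ℂ) * I) by push_cast; ring]
  convert h using 1
  field_simp

end Factor

lemma exists_rpow_neg_inv_le_four_mul {k : ℕ} (hk : k ≠ 0) {σ : ℝ} (hσ : 0 < σ)
    (hσ' : σ ≤ 1 / 2) :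
    ∃ M : ℕ, σ ^ (-(k : ℝ)⁻¹) ≤ 4 * M ∧ ∀ m < M, ((m + 1 : ℕ) : ℝ) ^ k * σ ≤ 1 / 2 := by
  set R := (2 * σ)⁻¹ ^ (k : ℝ)⁻¹
  have hR : 1 ≤ R := one_le_rpow (one_le_inv₀ (by positivity) |>.2 (by linarith)) (by positivity)
  refine ⟨⌊R⌋₊, ?_, fun m hm => ?_⟩
  · have h2 : (2 : ℝ) ^ (k : ℝ)⁻¹ ≤ 2 := by
      simpa using rpow_le_rpow_of_exponent_le (by norm_num : (1 : ℝ) ≤ 2)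
        (inv_le_one_of_one_le₀ (by exact_mod_cast Nat.one_le_iff_ne_zero.2 hk))
    have hσR : σ ^ (-(k : ℝ)⁻¹) = 2 ^ (k : ℝ)⁻¹ * R := by
      rw [rpow_neg hσ.le, ← inv_rpow hσ.le, ← mul_rpow (by norm_num) (by positivity)]
      congr 1; field_simp
    have hRM : R ≤ 2 * ⌊R⌋₊ := by
      have h1 : (1 : ℝ) ≤ ⌊R⌋₊ := by exact_mod_cast Nat.le_floor (by exact_mod_cast hR)
      linarith [Nat.lt_floor_add_one R]
    rw [hσR]; nlinarith [rpow_nonneg (by norm_num : (0 : ℝ) ≤ 2) (k : ℝ)⁻¹]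
  · have hmR : ((m + 1 : ℕ) : ℝ) ≤ R :=
      (Nat.cast_le.2 hm).trans (Nat.floor_le (by positivity))
    calc ((m + 1 : ℕ) : ℝ) ^ k * σ ≤ R ^ k * σ := by gcongr
      _ = 1 / 2 := by rw [rpow_inv_natCast_pow (by positivity) hk]; field_simp

lemma mul_le_tsum_of_le {f : ℕ → ℝ} (hf : Summable f) (hf₀ : ∀ m, 0 ≤ f m) {M : ℕ} {δ : ℝ}
    (hδ : ∀ m < M, δ ≤ f m) : M * δ ≤ ∑' m, f m :=
  calc M * δ = ∑ _m ∈ Finset.range M, δ := by simp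
    _ ≤ ∑ m ∈ Finset.range M, f m := Finset.sum_le_sum fun m hm => hδ m (Finset.mem_range.1 hm)
    _ ≤ ∑' m, f m := hf.sum_le_tsum _ fun m _ => hf₀ m

lemma tsum_wk_mul_exp_le (k : ℕ) {σ₀ σ : ℝ} (hσ₀ : 0 < σ₀) (hσ : σ₀ ≤ σ) :
    ∑' r : ℕ, (wk k (r + 1) : ℝ) * rexp (-((r + 1 : ℕ) : ℝ) * σ) ≤
      ∑' r : ℕ, ((r + 1 : ℕ) : ℝ) ^ 2 * rexp (-σ₀ * ((r + 1 : ℕ) : ℝ)) := by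
  have hle : ∀ r : ℕ, (wk k (r + 1) : ℝ) * rexp (-((r + 1 : ℕ) : ℝ) * σ) ≤
      ((r + 1 : ℕ) : ℝ) ^ 2 * rexp (-σ₀ * ((r + 1 : ℕ) : ℝ)) := fun r => by
    gcongr ?_ * ?_
    · exact_mod_cast wk_le_sq k (r + 1)
    · exact exp_le_exp.2 (by nlinarith [(r + 1).cast_nonneg (α := ℝ)])
  have hsum := (summable_nat_add_iff 1).2 (summable_pow_mul_exp_neg_nat_mul 2 hσ₀)
  exact (hsum.of_nonneg_of_le (fun r => by positivity) hle).tsum_le_tsum hle hsum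

lemma eventually_le_half_of_tsum_wk_eq (k : ℕ) {σ : ℕ → ℝ}
    (hσ : ∀ n : ℕ, 1 ≤ n → ∑' r : ℕ, (wk k (r + 1) : ℝ) * rexp (-((r + 1 : ℕ) : ℝ) * σ n) = n) :
    ∀ᶠ n in Filter.atTop, σ n ≤ 1 / 2 := by
  set C := ∑' r : ℕ, ((r + 1 : ℕ) : ℝ) ^ 2 * rexp (-(1 / 2) * ((r + 1 : ℕ) : ℝ))
  filter_upwards [Filter.eventually_ge_atTop 1, Filter.eventually_gt_atTop ⌈C⌉₊] with n hn hC
  by_contra! h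
  have hnC := (hσ n hn).symm.trans_le (tsum_wk_mul_exp_le k (by norm_num) h.le)
  linarith [Nat.le_ceil C, (Nat.cast_lt (α := ℝ)).2 hC]

lemma norm_Fk_add_mul_I_le {k : ℕ} (hk : 1 ≤ k) {σ : ℝ} (hσ : 0 < σ) (hσ' : σ ≤ 1 / 2) {τ : ℝ}
    (hτ : |τ| ≤ 2 * π * σ) :
    ‖Fk k (σ + τ * I)‖ ≤ ‖Fk k σ‖ * rexp (-(1 / 360) * τ ^ 2 * σ ^ (-(2 + 1 / (k : ℝ)))) := by
  obtain ⟨M, hM, hsmall⟩ := exists_rpow_neg_inv_le_four_mul (by omega : k ≠ 0) hσ hσ'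
  have hb : ∀ m : ℕ, 0 < ((m + 1 : ℕ) : ℝ) ^ k := fun m => by positivity
  have hsτ : 0 < ((σ : ℂ) + τ * I).re := by simpa
  have hs : 0 < (σ : ℂ).re := by simpa
  have hA := summable_log_norm_one_sub_exp (natCast_add_one_le_pow hk) hsτ
  have hB := summable_log_norm_one_sub_exp (natCast_add_one_le_pow hk) hs
  have hgain := mul_le_tsum_of_le (hA.sub hB)
    (fun m => sub_nonneg.2 (log_norm_one_sub_exp_le τ (hb m) hσ))
    (fun m hm => sq_div_le_log_norm_one_sub_exp_sub τ (hb m) hσ (hsmall m hm) hτ)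
  rw [hA.tsum_sub hB] at hgain
  have hpow : σ ^ (-(2 + 1 / (k : ℝ))) = σ ^ (-(k : ℝ)⁻¹) / σ ^ 2 := by
    rw [neg_add, rpow_add hσ, rpow_neg hσ.le, rpow_two, one_div]; ring
  have hX : 1 / 360 * τ ^ 2 * σ ^ (-(2 + 1 / (k : ℝ))) ≤ M * (τ ^ 2 / (90 * σ ^ 2)) := by
    rw [hpow]
    calc 1 / 360 * τ ^ 2 * (σ ^ (-(k : ℝ)⁻¹) / σ ^ 2) ≤ 1 / 360 * τ ^ 2 * (4 * M / σ ^ 2) := by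
          gcongr
      _ = M * (τ ^ 2 / (90 * σ ^ 2)) := by field_simp; ring
  rw [norm_Fk hk hsτ, norm_Fk hk hs, ← Real.exp_add, Real.exp_le_exp]
  linarith

theorem Fk_major_arc_bound (k : ℕ) (hk : 1 ≤ k) (σ : ℕ → ℝ)
    (hσ : ∀ n : ℕ, 1 ≤ n → 0 < σ n ∧
      ∑' r : ℕ, (wk k (r + 1) : ℝ) * Real.exp (-((r + 1 : ℕ) : ℝ) * σ n) = n) :
    ∃ c : ℝ, 0 < c ∧ ∃ N : ℕ, ∀ n : ℕ, N ≤ n → ∀ τ : ℝ,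
      |τ| ≤ 2 * π * σ n →
      ‖Fk k ((σ n : ℂ) + τ * Complex.I)‖ ≤
        ‖Fk k ((σ n : ℂ))‖ *
          Real.exp (-c * τ ^ 2 * (σ n) ^ (-(2 + 1 / (k : ℝ)))) := by
  obtain ⟨N, hN⟩ := Filter.eventually_atTop.1
    (eventually_le_half_of_tsum_wk_eq k fun n hn => (hσ n hn).2)
  refine ⟨1 / 360, by norm_num, max N 1, fun n hn τ hτ => ?_⟩
  exact norm_Fk_add_mul_I_le hk (hσ n (le_of_max_le_right hn)).1 (hN n (le_of_max_le_left hn)) hτ
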